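/- arXiv:1604.05408 — 5 statements merged into one kernel-verified Lean document; each statement's English description precedes it below -/
import Mathlib

section
/- Let R and S be (not necessarily unital) rings. The direct product R × S is finitely generated as a ring if and only if both R and S are finitely generated as rings. -/
/-- A (not necessarily unital) ring is finitely generated as a ring if it is generated
by a finite subset, closing under addition, negation and multiplication. -/
def NonUnitalRing.FGRing (R : Type*) [NonUnitalRing R] : Prop :=
  ∃ s : Finset R, NonUnitalSubring.closure (s : Set R) = ⊤

theorem nonUnitalRing_fg_prod_iff (R S : Type*) [NonUnitalRing R] [NonUnitalRing S] :
    NonUnitalRing.FGRing (R × S) ↔ NonUnitalRing.FGRing R ∧ NonUnitalRing.FGRing S := by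
  classical
  constructor
  · rintro ⟨s, hs⟩
    constructor
    · refine ⟨s.image Prod.fst, ?_⟩
      rw [Finset.coe_image, ← NonUnitalRingHom.coe_fst (R := R) (S := S),
        ← NonUnitalRingHom.map_closure, hs]
      rw [eq_top_iff]
      intro x _
      exact ⟨(x, 0), trivial, rfl⟩
    · refine ⟨s.image Prod.snd, ?_⟩
      rw [Finset.coe_image, ← NonUnitalRingHom.coe_snd (R := R) (S := S),
        ← NonUnitalRingHom.map_closure, hs]
      rw [eq_top_iff]
      intro x _
      exact ⟨(0, x), trivial, rfl⟩
  · rintro ⟨⟨a, ha⟩, ⟨b, hb⟩⟩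
    set inl : R →ₙ+* R × S := (NonUnitalRingHom.id R).prod 0
    set inr : S →ₙ+* R × S := (0 : S →ₙ+* R).prod (NonUnitalRingHom.id S)
    refine ⟨a.image inl ∪ b.image inr, ?_⟩
    rw [eq_top_iff]
    rintro ⟨x, y⟩ _
    have h1 : (x, (0 : S)) ∈ NonUnitalSubring.closure
        (((a.image inl ∪ b.image inr : Finset (R × S))) : Set (R × S)) := by
      have : (x, (0 : S)) ∈ (NonUnitalSubring.closure ((a : Set R))).map inl := by
        rw [ha]; exact ⟨x, trivial, rfl⟩
      rw [NonUnitalRingHom.map_closure] at this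
      refine NonUnitalSubring.closure_mono ?_ this
      intro z hz
      simp only [Finset.coe_union, Finset.coe_image, Set.mem_union]
      exact Or.inl hz
    have h2 : ((0 : R), y) ∈ NonUnitalSubring.closure
        (((a.image inl ∪ b.image inr : Finset (R × S))) : Set (R × S)) := by
      have : ((0 : R), y) ∈ (NonUnitalSubring.closure ((b : Set S))).map inr := by
        rw [hb]; exact ⟨y, trivial, rfl⟩
      rw [NonUnitalRingHom.map_closure] at this
      refine NonUnitalSubring.closure_mono ?_ this
      intro z hz
      simp only [Finset.coe_union, Finset.coe_image, Set.mem_union]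
      exact Or.inr hz
    have : (x, y) = (x, (0:S)) + ((0:R), y) := by simp
    rw [this]
    exact add_mem h1 h2
end

section
/- Consider the algebra A = (ℕ, max, min, s) where s(x) = x + 1. The algebra A is generated by the single element 0 (equivalently by {1} on positive naturals), but the direct square A × A (with componentwise operations) is not finitely generated: any finitely generated subalgebra of A × A is contained in {(x,y) : |x − y| ≤ M} for some bound M. -/
/-- The subalgebra of `(ℕ, max, min, s)` generated by a set `Z ⊆ ℕ`. -/
inductive NatCl (Z : Set ℕ) : ℕ → Prop
  | base {x : ℕ} : x ∈ Z → NatCl Z x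
  | max {x y : ℕ} : NatCl Z x → NatCl Z y → NatCl Z (Nat.max x y)
  | min {x y : ℕ} : NatCl Z x → NatCl Z y → NatCl Z (Nat.min x y)
  | succ {x : ℕ} : NatCl Z x → NatCl Z (x + 1)

/-- The subalgebra of the direct square `(ℕ, max, min, s)²` generated by `Z ⊆ ℕ × ℕ`,
with componentwise operations. -/
inductive NatCl2 (Z : Set (ℕ × ℕ)) : ℕ × ℕ → Prop
  | base {p : ℕ × ℕ} : p ∈ Z → NatCl2 Z p
  | max {p q : ℕ × ℕ} : NatCl2 Z p → NatCl2 Z q →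
      NatCl2 Z (Nat.max p.1 q.1, Nat.max p.2 q.2)
  | min {p q : ℕ × ℕ} : NatCl2 Z p → NatCl2 Z q →
      NatCl2 Z (Nat.min p.1 q.1, Nat.min p.2 q.2)
  | succ {p : ℕ × ℕ} : NatCl2 Z p → NatCl2 Z (p.1 + 1, p.2 + 1)

theorem nat_max_min_succ_square_not_fg :
    (∀ n : ℕ, NatCl {0} n) ∧
    (∀ Z : Finset (ℕ × ℕ), ∃ M : ℕ,
      (∀ p : ℕ × ℕ, NatCl2 (↑Z) p → p.1 - p.2 ≤ M ∧ p.2 - p.1 ≤ M) ∧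
      {p : ℕ × ℕ | NatCl2 (↑Z) p} ≠ Set.univ) := by
  constructor
  · intro n
    induction n with
    | zero => exact NatCl.base rfl
    | succ k ih => exact NatCl.succ ih
  · intro Z
    set M : ℕ := Z.sup (fun p => Nat.max (p.1 - p.2) (p.2 - p.1)) with hM
    have hb : ∀ p : ℕ × ℕ, NatCl2 (↑Z) p → p.1 - p.2 ≤ M ∧ p.2 - p.1 ≤ M := by
      intro p hp
      induction hp with
      | base h =>
          have := Finset.le_sup (f := fun p => Nat.max (p.1 - p.2) (p.2 - p.1)) h
          simp only [Nat.max_le] at this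
          constructor <;> omega
      | max hp hq ihp ihq =>
          obtain ⟨h1, h2⟩ := ihp; obtain ⟨h3, h4⟩ := ihq
          constructor <;> simp only [Nat.max_def] <;> split <;> split <;> omega
      | min hp hq ihp ihq =>
          obtain ⟨h1, h2⟩ := ihp; obtain ⟨h3, h4⟩ := ihq
          constructor <;> simp only [Nat.min_def] <;> split <;> split <;> omega
      | succ hp ih => omega
    refine ⟨M, hb, ?_⟩
    intro hcontra
    have h : NatCl2 (↑Z) (M + 1, 0) := Set.eq_univ_iff_forall.mp hcontra (M + 1, 0)
    have := hb (M + 1, 0) h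
    simp at this
end

section
/- Let A be an abelian group that is not finitely generated, viewed as an algebra with operations +, −, and a constant c_a for every element a ∈ A. Then A is finitely generated as such an algebra (by the empty set), but A × A is not finitely generated: the subalgebra of A × A generated by any finite set Z together with the diagonal constants is contained in {(a,b) : a − b ∈ A'}, where A' is the subgroup of A generated by {x − y : (x,y) ∈ Z}, and A' ≠ A. -/
/-- Let `A` be an abelian group that is not finitely generated, viewed as an algebra with
`+`, `-` and a constant for each element of `A` (interpreted diagonally in `A × A`).
Then `A × A` is not finitely generated: for any finite set `Z`, the subalgebra generated
by `Z` (i.e. the subgroup generated by `Z` together with the diagonal) is contained in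
`{(a,b) : a - b ∈ A'}` where `A'` is the subgroup generated by the differences of pairs
in `Z`, and `A' ≠ A`. -/
theorem expanded_abelian_group_square_not_fg (A : Type*) [AddCommGroup A]
    (hA : ¬ AddGroup.FG A) (Z : Finset (A × A)) :
    (AddSubgroup.closure ((Z : Set (A × A)) ∪ {p : A × A | p.1 = p.2}) : Set (A × A)) ⊆
      {p : A × A | p.1 - p.2 ∈ AddSubgroup.closure {x : A | ∃ p ∈ Z, p.1 - p.2 = x}} ∧
    AddSubgroup.closure {x : A | ∃ p ∈ Z, p.1 - p.2 = x} ≠ ⊤ ∧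
    AddSubgroup.closure ((Z : Set (A × A)) ∪ {p : A × A | p.1 = p.2}) ≠ ⊤ := by
  set A' : AddSubgroup A := AddSubgroup.closure {x : A | ∃ p ∈ Z, p.1 - p.2 = x} with hA'
  set K : AddSubgroup (A × A) :=
    { carrier := {p : A × A | p.1 - p.2 ∈ A'}
      zero_mem' := by
        show (0:A×A).1 - (0:A×A).2 ∈ A'
        simpa using A'.zero_mem
      add_mem' := by
        intro a b ha hb
        have := A'.add_mem ha hb
        simpa [sub_add_sub_comm] using this
      neg_mem' := by
        intro a ha
        show (-a).1 - (-a).2 ∈ A'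
        simp only [Prod.fst_neg, Prod.snd_neg, neg_sub_neg]
        simpa [neg_sub] using A'.neg_mem ha } with hK
  have hsub : (AddSubgroup.closure ((Z : Set (A × A)) ∪ {p : A × A | p.1 = p.2}) : Set (A × A))
      ⊆ {p : A × A | p.1 - p.2 ∈ A'} := by
    intro p hp
    have : AddSubgroup.closure ((Z : Set (A × A)) ∪ {p : A × A | p.1 = p.2}) ≤ K := by
      rw [AddSubgroup.closure_le]
      rintro q (hq | hq)
      · exact AddSubgroup.subset_closure ⟨q, hq, rfl⟩
      · simp only [Set.mem_setOf_eq] at hq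
        show q.1 - q.2 ∈ A'
        rw [hq, sub_self]; exact A'.zero_mem
    exact this hp
  have hA'top : A' ≠ ⊤ := by
    intro htop
    apply hA
    rw [AddGroup.fg_iff]
    refine ⟨{x : A | ∃ p ∈ Z, p.1 - p.2 = x}, by rw [← hA', htop], ?_⟩
    have he : {x : A | ∃ p ∈ Z, p.1 - p.2 = x} = (fun p : A × A => p.1 - p.2) '' Z := by
      ext x; simp [eq_comm]
    rw [he]
    exact Z.finite_toSet.image _
  refine ⟨hsub, hA'top, ?_⟩
  intro htop
  apply hA'top
  rw [eq_top_iff]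
  intro a _
  have : ((a, 0) : A × A) ∈ (AddSubgroup.closure ((Z : Set (A × A)) ∪ {p : A × A | p.1 = p.2}) : Set (A × A)) := by
    rw [htop]; trivial
  have := hsub this
  simpa using this
end

section
/- Every free lattice satisfies Whitman's condition: for all x, y, u, v, one has x ⊓ y ≤ u ⊔ v if and only if x ≤ u ⊔ v, or y ≤ u ⊔ v, or x ⊓ y ≤ u, or x ⊓ y ≤ v. -/
/-- `ι : X → F` exhibits the lattice `F` as the free lattice on `X`: every map from `X`
to a lattice extends uniquely to a lattice homomorphism on `F`. -/
def IsFreeLatticeOn {X : Type u} {F : Type v} [Lattice F] (ι : X → F) : Prop :=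
  ∀ (L : Type (max u v)) [Lattice L], ∀ f : X → L,
    ∃! g : LatticeHom F L, ∀ x : X, g (ι x) = f x

namespace WhitmanAux

open Classical

variable {L : Type*} [Lattice L]

/-- Day's doubling of the interval `[a, b]` in `L`: elements inside the interval get
doubled (flag `false` = lower copy, `true` = upper copy); elements outside carry flag
`false`. -/
def Dbl (a b : L) : Type _ := {p : L × Bool // p.1 ∈ Set.Icc a b ∨ p.2 = false}

variable {a b : L}

/-- Flag used for meets: treated as `true` outside the interval. -/
noncomputable def uflag (a b p : L) (i : Bool) : Bool :=
  if p ∈ Set.Icc a b then i else true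

/-- Flag used for joins: treated as `false` outside the interval. -/
noncomputable def dflag (a b p : L) (i : Bool) : Bool :=
  if p ∈ Set.Icc a b then i else false

noncomputable instance : Lattice (Dbl a b) where
  le p q := p.1.1 ≤ q.1.1 ∧ (p.1.1 ∈ Set.Icc a b → q.1.1 ∈ Set.Icc a b → p.1.2 ≤ q.1.2)
  le_refl p := ⟨le_rfl, fun _ _ => le_rfl⟩
  le_trans p q r h1 h2 := by
    refine ⟨h1.1.trans h2.1, fun hp hr => ?_⟩
    have hq : q.1.1 ∈ Set.Icc a b := ⟨hp.1.trans h1.1, h2.1.trans hr.2⟩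
    exact (h1.2 hp hq).trans (h2.2 hq hr)
  le_antisymm p q h1 h2 := by
    have he : p.1.1 = q.1.1 := le_antisymm h1.1 h2.1
    have hf : p.1.2 = q.1.2 := by
      by_cases hm : p.1.1 ∈ Set.Icc a b
      · exact le_antisymm (h1.2 hm (he ▸ hm)) (h2.2 (he ▸ hm) hm)
      · have hp := p.2.resolve_left hm
        have hq := q.2.resolve_left (he ▸ hm)
        rw [hp, hq]
    exact Subtype.ext (Prod.ext he hf)
  inf p q :=
    ⟨(p.1.1 ⊓ q.1.1,
      if p.1.1 ⊓ q.1.1 ∈ Set.Icc a b then uflag a b p.1.1 p.1.2 && uflag a b q.1.1 q.1.2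
      else false), by
        by_cases h : p.1.1 ⊓ q.1.1 ∈ Set.Icc a b
        · exact Or.inl h
        · simp [h]⟩
  inf_le_left p q := by
    refine ⟨inf_le_left, fun hm hp => ?_⟩
    show (if p.1.1 ⊓ q.1.1 ∈ Set.Icc a b then
      uflag a b p.1.1 p.1.2 && uflag a b q.1.1 q.1.2 else false) ≤ p.1.2
    rw [if_pos hm]
    unfold uflag
    rw [if_pos hp]
    cases p.1.2 <;> simp
  inf_le_right p q := by
    refine ⟨inf_le_right, fun hm hq => ?_⟩
    show (if p.1.1 ⊓ q.1.1 ∈ Set.Icc a b then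
      uflag a b p.1.1 p.1.2 && uflag a b q.1.1 q.1.2 else false) ≤ q.1.2
    rw [if_pos hm]
    unfold uflag
    rw [if_pos hq]
    cases q.1.2 <;> cases (if p.1.1 ∈ Set.Icc a b then p.1.2 else true) <;> simp
  le_inf p q r h1 h2 := by
    refine ⟨le_inf h1.1 h2.1, fun hp hm => ?_⟩
    have hq : p.1.2 ≤ uflag a b q.1.1 q.1.2 := by
      unfold uflag
      by_cases hq : q.1.1 ∈ Set.Icc a b
      · simpa [hq] using h1.2 hp hq
      · simp [hq]
    have hr : p.1.2 ≤ uflag a b r.1.1 r.1.2 := by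
      unfold uflag
      by_cases hr : r.1.1 ∈ Set.Icc a b
      · simpa [hr] using h2.2 hp hr
      · simp [hr]
    show p.1.2 ≤ (if q.1.1 ⊓ r.1.1 ∈ Set.Icc a b then
      uflag a b q.1.1 q.1.2 && uflag a b r.1.1 r.1.2 else false)
    rw [if_pos hm]
    revert hq hr
    cases p.1.2 <;> cases (uflag a b q.1.1 q.1.2) <;> cases (uflag a b r.1.1 r.1.2) <;> simp
  sup p q :=
    ⟨(p.1.1 ⊔ q.1.1,
      if p.1.1 ⊔ q.1.1 ∈ Set.Icc a b then dflag a b p.1.1 p.1.2 || dflag a b q.1.1 q.1.2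
      else false), by
        by_cases h : p.1.1 ⊔ q.1.1 ∈ Set.Icc a b
        · exact Or.inl h
        · simp [h]⟩
  le_sup_left p q := by
    refine ⟨le_sup_left, fun hp hm => ?_⟩
    show p.1.2 ≤ (if p.1.1 ⊔ q.1.1 ∈ Set.Icc a b then
      dflag a b p.1.1 p.1.2 || dflag a b q.1.1 q.1.2 else false)
    rw [if_pos hm]
    unfold dflag
    rw [if_pos hp]
    cases p.1.2 <;> simp
  le_sup_right p q := by
    refine ⟨le_sup_right, fun hq hm => ?_⟩
    show q.1.2 ≤ (if p.1.1 ⊔ q.1.1 ∈ Set.Icc a b then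
      dflag a b p.1.1 p.1.2 || dflag a b q.1.1 q.1.2 else false)
    rw [if_pos hm]
    unfold dflag
    rw [if_pos hq]
    cases q.1.2 <;> cases (if p.1.1 ∈ Set.Icc a b then p.1.2 else false) <;> simp
  sup_le p q r h1 h2 := by
    refine ⟨sup_le h1.1 h2.1, fun hm hr => ?_⟩
    have hp : dflag a b p.1.1 p.1.2 ≤ r.1.2 := by
      unfold dflag
      by_cases hp : p.1.1 ∈ Set.Icc a b
      · simpa [hp] using h1.2 hp hr
      · simp [hp]
    have hq : dflag a b q.1.1 q.1.2 ≤ r.1.2 := by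
      unfold dflag
      by_cases hq : q.1.1 ∈ Set.Icc a b
      · simpa [hq] using h2.2 hq hr
      · simp [hq]
    show (if p.1.1 ⊔ q.1.1 ∈ Set.Icc a b then
      dflag a b p.1.1 p.1.2 || dflag a b q.1.1 q.1.2 else false) ≤ r.1.2
    rw [if_pos hm]
    revert hp hq
    cases r.1.2 <;> cases (dflag a b p.1.1 p.1.2) <;> cases (dflag a b q.1.1 q.1.2) <;> simp

/-- Projection of the doubling back onto `L`, a lattice homomorphism. -/
def proj (a b : L) : LatticeHom (Dbl a b) L where
  toFun p := p.1.1
  map_sup' _ _ := rfl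
  map_inf' _ _ := rfl

/-- `ULift.up` as a lattice homomorphism. -/
def upHom (M : Type w) [Lattice M] : LatticeHom M (ULift.{w'} M) where
  toFun := ULift.up
  map_sup' _ _ := rfl
  map_inf' _ _ := rfl

/-- `ULift.down` as a lattice homomorphism. -/
def downHom (M : Type w) [Lattice M] : LatticeHom (ULift.{w'} M) M where
  toFun := ULift.down
  map_sup' _ _ := rfl
  map_inf' _ _ := rfl

end WhitmanAux

open WhitmanAux in
/-- Every free lattice satisfies Whitman's condition. -/
theorem free_lattice_whitman {X : Type u} {F : Type v} [Lattice F] (ι : X → F)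
    (hF : IsFreeLatticeOn ι) (x y u v : F) :
    x ⊓ y ≤ u ⊔ v ↔ x ≤ u ⊔ v ∨ y ≤ u ⊔ v ∨ x ⊓ y ≤ u ∨ x ⊓ y ≤ v := by
  constructor
  · intro h
    by_contra hc
    push_neg at hc
    obtain ⟨hx, hy, hu, hv⟩ := hc
    classical
    set m := x ⊓ y with hm
    set j := u ⊔ v with hj
    -- the doubled lattice
    set D := Dbl m j with hD
    -- section on generators: always the lower copy
    obtain ⟨g, hg, -⟩ := hF (ULift.{u} D)
      (fun t => ULift.up ⟨(ι t, false), Or.inr rfl⟩)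
    -- the projection back, as a lattice hom F → F
    set p : LatticeHom F F := (proj m j).comp ((downHom D).comp g) with hp
    -- uniqueness forces p = id
    obtain ⟨e, -, heu⟩ := hF (ULift.{u} F) (fun t => ULift.up (ι t))
    have h1 : (upHom F).comp p = e := by
      apply heu
      intro t
      simp [hp, LatticeHom.comp_apply, hg t, upHom, downHom, proj]
    have h2 : (upHom F).comp (LatticeHom.id F) = e := by
      apply heu
      intro t
      simp [upHom]
    have hid : ∀ w : F, ((g w).down : D).1.1 = w := by
      intro w
      have := congrArg (fun (q : LatticeHom F (ULift.{u} F)) => (q w).down)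
        (h1.trans h2.symm)
      simpa [hp, LatticeHom.comp_apply, upHom, downHom, proj] using this
    -- memberships
    have hmI : m ∈ Set.Icc m j := ⟨le_rfl, h⟩
    have hjI : j ∈ Set.Icc m j := ⟨h, le_rfl⟩
    have hxI : x ∉ Set.Icc m j := fun hc => hx hc.2
    have hyI : y ∉ Set.Icc m j := fun hc => hy hc.2
    have huI : u ∉ Set.Icc m j := fun hc => hu hc.1
    have hvI : v ∉ Set.Icc m j := fun hc => hv hc.1
    -- flags of the images of the generators of the inequality
    have hxf : ((g x).down : D).1.2 = false := ((g x).down.2).resolve_left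
      (by rw [hid x]; exact hxI)
    have hyf : ((g y).down : D).1.2 = false := ((g y).down.2).resolve_left
      (by rw [hid y]; exact hyI)
    have huf : ((g u).down : D).1.2 = false := ((g u).down.2).resolve_left
      (by rw [hid u]; exact huI)
    have hvf : ((g v).down : D).1.2 = false := ((g v).down.2).resolve_left
      (by rw [hid v]; exact hvI)
    -- monotonicity: g m ≤ g j in ULift D, hence in D
    have hmono : ((g m).down : D) ≤ (g j).down := by
      have : g m ≤ g j := OrderHomClass.mono g h
      exact this
    have hmeq : (g m).down = ((g x).down : D) ⊓ (g y).down := by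
      have : g m = g x ⊓ g y := map_inf g x y
      rw [this]; rfl
    have hjeq : (g j).down = ((g u).down : D) ⊔ (g v).down := by
      have : g j = g u ⊔ g v := map_sup g u v
      rw [this]; rfl
    rw [hmeq, hjeq] at hmono
    -- unfold the order on D
    obtain ⟨-, hflag⟩ := hmono
    have hmem1 : ((((g x).down : D) ⊓ (g y).down).1.1 ∈ Set.Icc m j) := by
      show ((g x).down : D).1.1 ⊓ ((g y).down : D).1.1 ∈ Set.Icc m j
      rw [hid x, hid y]; exact hmI
    have hmem2 : ((((g u).down : D) ⊔ (g v).down).1.1 ∈ Set.Icc m j) := by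
      show ((g u).down : D).1.1 ⊔ ((g v).down : D).1.1 ∈ Set.Icc m j
      rw [hid u, hid v]; exact hjI
    have hbad := hflag hmem1 hmem2
    have hf1 : ((((g x).down : D) ⊓ (g y).down).1.2) = true := by
      show (if ((g x).down : D).1.1 ⊓ ((g y).down : D).1.1 ∈ Set.Icc m j then
        uflag m j ((g x).down : D).1.1 ((g x).down : D).1.2 &&
        uflag m j ((g y).down : D).1.1 ((g y).down : D).1.2 else false) = true
      rw [hid x, hid y]
      simp [hmI, uflag, hxI, hyI]
      exact ⟨⟨inf_le_left, inf_le_right⟩, h⟩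
    have hf2 : ((((g u).down : D) ⊔ (g v).down).1.2) = false := by
      show (if ((g u).down : D).1.1 ⊔ ((g v).down : D).1.1 ∈ Set.Icc m j then
        dflag m j ((g u).down : D).1.1 ((g u).down : D).1.2 ||
        dflag m j ((g v).down : D).1.1 ((g v).down : D).1.2 else false) = false
      rw [hid u, hid v]
      simp [hjI, dflag, huI, hvI, huf, hvf]
    rw [hf1, hf2] at hbad
    exact absurd hbad (by simp)
  · rintro (h | h | h | h)
    · exact le_trans inf_le_left h
    · exact le_trans inf_le_right h
    · exact le_trans h le_sup_left
    · exact le_trans h le_sup_right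
end

section
/- A sublattice of a free lattice of finite length (no infinite chain) is finite. -/
universe u v w

/-- Doubling of a convex set `C` in a lattice `F` (A. Day's construction).
Elements are pairs `(x, p)` with `p` a proposition that can only hold when `x ∈ C`. -/
def JDbl {F : Type v} [Lattice F] (C : Set F) (_hC : ∀ ⦃x y z : F⦄, x ∈ C → z ∈ C → x ≤ y → y ≤ z → y ∈ C) : Type v :=
  {p : F × Prop // ¬ p.1 ∈ C → ¬ p.2}

namespace JDbl

variable {F : Type v} [Lattice F] {C : Set F}
  {hC : ∀ ⦃x y z : F⦄, x ∈ C → z ∈ C → x ≤ y → y ≤ z → y ∈ C}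

noncomputable instance : Lattice (JDbl C hC) where
  le p q := p.1.1 ≤ q.1.1 ∧ (p.1.1 ∈ C → q.1.1 ∈ C → (p.1.2 → q.1.2))
  le_refl p := ⟨le_refl _, fun _ _ h => h⟩
  le_trans p q r h1 h2 := by
    refine ⟨h1.1.trans h2.1, fun hp hr ht => ?_⟩
    have hq : q.1.1 ∈ C := hC hp hr h1.1 h2.1
    exact h2.2 hq hr (h1.2 hp hq ht)
  le_antisymm p q h1 h2 := by
    have he : p.1.1 = q.1.1 := le_antisymm h1.1 h2.1
    rcases p with ⟨⟨x, i⟩, hi⟩; rcases q with ⟨⟨y, j⟩, hj⟩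
    simp only at he
    subst he
    have : i = j := by
      by_cases hx : x ∈ C
      · exact propext ⟨h1.2 hx hx, h2.2 hx hx⟩
      · exact propext ⟨fun h => absurd h (hi hx), fun h => absurd h (hj hx)⟩
    subst this; rfl
  sup p q := ⟨(p.1.1 ⊔ q.1.1, (p.1.1 ⊔ q.1.1) ∈ C ∧ ((p.1.1 ∈ C ∧ p.1.2) ∨ (q.1.1 ∈ C ∧ q.1.2))),
    fun h h2 => h h2.1⟩
  le_sup_left p q := ⟨le_sup_left, fun hp hs hi => ⟨hs, Or.inl ⟨hp, hi⟩⟩⟩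
  le_sup_right p q := ⟨le_sup_right, fun hq hs hj => ⟨hs, Or.inr ⟨hq, hj⟩⟩⟩
  sup_le p q r h1 h2 := by
    refine ⟨sup_le h1.1 h2.1, fun hs hr ht => ?_⟩
    rcases ht.2 with ⟨hp, hi⟩ | ⟨hq, hj⟩
    · exact h1.2 hp hr hi
    · exact h2.2 hq hr hj
  inf p q := ⟨(p.1.1 ⊓ q.1.1, (p.1.1 ⊓ q.1.1) ∈ C ∧ (p.1.1 ∈ C → p.1.2) ∧ (q.1.1 ∈ C → q.1.2)),
    fun h h2 => h h2.1⟩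
  inf_le_left p q := ⟨inf_le_left, fun _ hp ht => ht.2.1 hp⟩
  inf_le_right p q := ⟨inf_le_right, fun _ hq ht => ht.2.2 hq⟩
  le_inf p q r h1 h2 := by
    refine ⟨le_inf h1.1 h2.1, fun hp hm ht => ?_⟩
    exact ⟨hm, fun hq => h1.2 hp hq ht, fun hr => h2.2 hp hr ht⟩

/-- The collapsing lattice homomorphism `F[C] → F`. -/
noncomputable def proj : LatticeHom (JDbl C hC) F where
  toFun p := p.1.1
  map_sup' p q := rfl
  map_inf' p q := rfl

@[simp] lemma proj_apply (p : JDbl C hC) : proj p = p.1.1 := rfl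

lemma le_def {p q : JDbl C hC} :
    p ≤ q ↔ p.1.1 ≤ q.1.1 ∧ (p.1.1 ∈ C → q.1.1 ∈ C → (p.1.2 → q.1.2)) := Iff.rfl

lemma sup_def (p q : JDbl C hC) : (p ⊔ q).1 =
    (p.1.1 ⊔ q.1.1, (p.1.1 ⊔ q.1.1) ∈ C ∧ ((p.1.1 ∈ C ∧ p.1.2) ∨ (q.1.1 ∈ C ∧ q.1.2))) := rfl

lemma inf_def (p q : JDbl C hC) : (p ⊓ q).1 =
    (p.1.1 ⊓ q.1.1, (p.1.1 ⊓ q.1.1) ∈ C ∧ (p.1.1 ∈ C → p.1.2) ∧ (q.1.1 ∈ C → q.1.2)) := rfl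

end JDbl


section FreeHelpers

/-- `ULift.up` as a lattice hom. -/
def upLatticeHom (M : Type v) [Lattice M] : LatticeHom M (ULift.{u} M) where
  toFun := ULift.up
  map_sup' _ _ := rfl
  map_inf' _ _ := rfl

variable {X : Type u} {F : Type v} [Lattice F] {ι : X → F}

lemma IsFreeLatticeOn.exists_hom (hF : IsFreeLatticeOn ι) (M : Type v) [Lattice M] (f : X → M) :
    ∃ g : LatticeHom F M, ∀ x, g (ι x) = f x := by
  obtain ⟨g, hg, -⟩ := hF (ULift.{u} M) (fun x => ULift.up (f x))
  refine ⟨{ toFun := fun a => (g a).down,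
            map_sup' := fun a b => congrArg ULift.down (map_sup g a b),
            map_inf' := fun a b => congrArg ULift.down (map_inf g a b) }, fun x => ?_⟩
  exact congrArg ULift.down (hg x)

lemma IsFreeLatticeOn.hom_unique (hF : IsFreeLatticeOn ι) {M : Type v} [Lattice M] (g h : LatticeHom F M)
    (he : ∀ x, g (ι x) = h (ι x)) : ∀ a, g a = h a := by
  obtain ⟨k, -, hu⟩ := hF (ULift.{u} M) (fun x => ULift.up (g (ι x)))
  have h1 : (upLatticeHom.{u} M).comp g = k := hu _ (fun x => rfl)
  have h2 : (upLatticeHom.{u} M).comp h = k := hu _ (fun x => congrArg ULift.up (he x).symm)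
  intro a
  have := congrArg (fun (F' : LatticeHom F (ULift.{u} M)) => (F' a).down) (h1.trans h2.symm)
  simpa [upLatticeHom] using this

end FreeHelpers

section Structural

variable {X : Type u} {F : Type v} [Lattice F] {ι : X → F}

/-- Generators of a free lattice are join-prime. -/
lemma IsFreeLatticeOn.joinPrime (hF : IsFreeLatticeOn ι) (x : X) {a b : F}
    (h : ι x ≤ a ⊔ b) : ι x ≤ a ∨ ι x ≤ b := by
  by_contra hcon
  push_neg at hcon
  obtain ⟨ha, hb⟩ := hcon
  set C : Set F := {y | ι x ≤ y} with hCdef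
  have hC : ∀ ⦃p q r : F⦄, p ∈ C → r ∈ C → p ≤ q → q ≤ r → q ∈ C :=
    fun p q r hp _ hpq _ => le_trans hp hpq
  obtain ⟨g, hg⟩ := hF.exists_hom (JDbl C hC)
    (fun x' => ⟨(ι x', ι x ≤ ι x'), fun h hh => h hh⟩)
  -- the projection composed with `g` fixes generators, hence is the identity:
  have hsec : ∀ a : F, (g a).1.1 = a := by
    have := hF.hom_unique ((JDbl.proj (hC := hC)).comp g) (LatticeHom.id F)
      (fun x' => by simp [hg x']; rfl)
    intro a; simpa using this a
  have hmono : g (ι x) ≤ g (a ⊔ b) := OrderHomClass.mono g h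
  rw [map_sup] at hmono
  have htag : ((g a ⊔ g b)).1.2 → False := by
    rw [JDbl.sup_def]
    rintro ⟨-, ⟨hmem, -⟩ | ⟨hmem, -⟩⟩
    · rw [hsec a] at hmem; exact ha hmem
    · rw [hsec b] at hmem; exact hb hmem
  apply htag
  have hx1 : (g (ι x)).1.1 ∈ C := by rw [hsec]; exact le_refl _
  have hs1 : (g a ⊔ g b).1.1 ∈ C := by
    rw [JDbl.sup_def, hsec a, hsec b]; exact h
  refine hmono.2 hx1 hs1 ?_
  rw [hg x]

/-- Whitman's condition (W) for free lattices. -/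
lemma IsFreeLatticeOn.whitman (hF : IsFreeLatticeOn ι) {a b c d : F}
    (h : a ⊓ b ≤ c ⊔ d) :
    a ≤ c ⊔ d ∨ b ≤ c ⊔ d ∨ a ⊓ b ≤ c ∨ a ⊓ b ≤ d := by
  by_contra hcon
  push_neg at hcon
  obtain ⟨ha, hb, hc, hd⟩ := hcon
  set C : Set F := Set.Icc (a ⊓ b) (c ⊔ d) with hCdef
  have hC : ∀ ⦃p q r : F⦄, p ∈ C → r ∈ C → p ≤ q → q ≤ r → q ∈ C :=
    fun p q r hp hr hpq hqr => ⟨hp.1.trans hpq, hqr.trans hr.2⟩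
  obtain ⟨g, hg⟩ := hF.exists_hom (JDbl C hC)
    (fun x' => ⟨(ι x', False), fun _ hh => hh⟩)
  have hsec : ∀ u : F, (g u).1.1 = u := by
    have := hF.hom_unique ((JDbl.proj (hC := hC)).comp g) (LatticeHom.id F)
      (fun x' => by simp [hg x']; rfl)
    intro u; simpa using this u
  have haC : a ∉ C := fun hmem => ha hmem.2
  have hbC : b ∉ C := fun hmem => hb hmem.2
  have hcC : c ∉ C := fun hmem => hc hmem.1
  have hdC : d ∉ C := fun hmem => hd hmem.1
  have hmono : g (a ⊓ b) ≤ g (c ⊔ d) := OrderHomClass.mono g h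
  rw [map_inf, map_sup] at hmono
  have hm1 : (g a ⊓ g b).1.1 ∈ C := by
    rw [JDbl.inf_def, hsec a, hsec b]; exact ⟨le_refl _, h⟩
  have hs1 : (g c ⊔ g d).1.1 ∈ C := by
    rw [JDbl.sup_def, hsec c, hsec d]; exact ⟨h, le_refl _⟩
  have htagm : (g a ⊓ g b).1.2 := by
    rw [JDbl.inf_def]
    refine ⟨by rw [hsec a, hsec b]; exact ⟨le_refl _, h⟩, ?_, ?_⟩
    · intro hmem; rw [hsec a] at hmem; exact absurd hmem haC
    · intro hmem; rw [hsec b] at hmem; exact absurd hmem hbC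
  have htags : (g c ⊔ g d).1.2 := hmono.2 hm1 hs1 htagm
  rw [JDbl.sup_def] at htags
  rcases htags.2 with ⟨hmem, -⟩ | ⟨hmem, -⟩
  · rw [hsec c] at hmem; exact hcC hmem
  · rw [hsec d] at hmem; exact hdC hmem

/-- Lattice terms. -/
inductive LatTerm (X : Type u) : Type u
  | var : X → LatTerm X
  | jn : LatTerm X → LatTerm X → LatTerm X
  | mt : LatTerm X → LatTerm X → LatTerm X

def LatTerm.eval (ι : X → F) : LatTerm X → F
  | .var x => ι x
  | .jn s t => s.eval ι ⊔ t.eval ι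
  | .mt s t => s.eval ι ⊓ t.eval ι

/-- A free lattice is generated by its generators. -/
lemma IsFreeLatticeOn.exists_term (hF : IsFreeLatticeOn ι) (u : F) :
    ∃ t : LatTerm X, t.eval ι = u := by
  set Sg : Sublattice F :=
    { carrier := Set.range (LatTerm.eval ι)
      supClosed' := by rintro _ ⟨s, rfl⟩ _ ⟨t, rfl⟩; exact ⟨.jn s t, rfl⟩
      infClosed' := by rintro _ ⟨s, rfl⟩ _ ⟨t, rfl⟩; exact ⟨.mt s t, rfl⟩ } with hSg
  obtain ⟨g, hg⟩ := hF.exists_hom Sg (fun x => ⟨ι x, ⟨.var x, rfl⟩⟩)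
  have hsec : ∀ u : F, (Sg.subtype.comp g) u = (LatticeHom.id F) u :=
    hF.hom_unique _ _ (fun x' => by simp [hg x'])
  have : ((g u : Sg) : F) = u := hsec u
  rw [← this]
  exact (g u).2

/-- The key induction for join-semidistributivity. -/
lemma IsFreeLatticeOn.sd_key (hF : IsFreeLatticeOn ι) (t : LatTerm X) :
    ∀ a b c u : F, a ⊔ b = u → a ⊔ c = u → t.eval ι ≤ u → t.eval ι ≤ a ⊔ (b ⊓ c) := by
  induction t with
  | var x =>
    intro a b c u hb hc hle
    simp only [LatTerm.eval] at *
    rcases hF.joinPrime x (hb ▸ hle) with h | h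
    · exact h.trans le_sup_left
    · rcases hF.joinPrime x (hc ▸ hle) with h' | h'
      · exact h'.trans le_sup_left
      · exact (le_inf h h').trans le_sup_right
  | jn t₁ t₂ ih₁ ih₂ =>
    intro a b c u hb hc hle
    simp only [LatTerm.eval] at *
    exact sup_le (ih₁ a b c u hb hc (le_sup_left.trans hle))
      (ih₂ a b c u hb hc (le_sup_right.trans hle))
  | mt t₁ t₂ ih₁ ih₂ =>
    intro a b c u hb hc hle
    simp only [LatTerm.eval] at *
    set v₁ := t₁.eval ι
    set v₂ := t₂.eval ι
    rcases hF.whitman (hb ▸ hle : v₁ ⊓ v₂ ≤ a ⊔ b) with h1 | h1 | h1 | h1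
    · exact inf_le_left.trans (ih₁ a b c u hb hc (hb ▸ h1))
    · exact inf_le_right.trans (ih₂ a b c u hb hc (hb ▸ h1))
    · -- v₁ ⊓ v₂ ≤ a : done
      exact h1.trans le_sup_left
    · -- v₁ ⊓ v₂ ≤ b ; now use a ⊔ c = u
      rcases hF.whitman (hc ▸ hle : v₁ ⊓ v₂ ≤ a ⊔ c) with h2 | h2 | h2 | h2
      · exact inf_le_left.trans (ih₁ a b c u hb hc (hc ▸ h2))
      · exact inf_le_right.trans (ih₂ a b c u hb hc (hc ▸ h2))
      · exact h2.trans le_sup_left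
      · exact (le_inf h1 h2).trans le_sup_right

/-- Free lattices are join-semidistributive. -/
lemma IsFreeLatticeOn.sd_join (hF : IsFreeLatticeOn ι) (a b c : F)
    (h : a ⊔ b = a ⊔ c) : a ⊔ (b ⊓ c) = a ⊔ b := by
  obtain ⟨t, ht⟩ := hF.exists_term (a ⊔ b)
  refine le_antisymm (sup_le le_sup_left (inf_le_left.trans le_sup_right)) ?_
  have := hF.sd_key t a b c (a ⊔ b) rfl h.symm (le_of_eq ht)
  rwa [ht] at this

end Structural

section Endgame

variable {K : Type w} [Lattice K]

lemma noChain_wfLT (hch : ∀ C : Set K, IsChain (· ≤ ·) C → C.Finite) :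
    WellFounded ((· < ·) : K → K → Prop) := by
  rw [RelEmbedding.wellFounded_iff_isEmpty]
  constructor
  intro e
  have hanti : StrictAnti (e : ℕ → K) := fun m n h => e.map_rel_iff.2 h
  have hchain : IsChain (· ≤ ·) (Set.range (e : ℕ → K)) := by
    rintro _ ⟨i, rfl⟩ _ ⟨j, rfl⟩ -
    rcases lt_trichotomy i j with h | h | h
    · exact Or.inr (hanti h).le
    · exact Or.inl (h ▸ le_refl _)
    · exact Or.inl (hanti h).le
  exact (Set.infinite_range_of_injective hanti.injective) (hch _ hchain)

lemma noChain_wfGT (hch : ∀ C : Set K, IsChain (· ≤ ·) C → C.Finite) :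
    WellFounded ((· > ·) : K → K → Prop) := by
  rw [RelEmbedding.wellFounded_iff_isEmpty]
  constructor
  intro e
  have hmono : StrictMono (e : ℕ → K) := fun m n h => e.map_rel_iff.2 h
  have hchain : IsChain (· ≤ ·) (Set.range (e : ℕ → K)) := by
    rintro _ ⟨i, rfl⟩ _ ⟨j, rfl⟩ -
    rcases lt_trichotomy i j with h | h | h
    · exact Or.inl (hmono h).le
    · exact Or.inl (h ▸ le_refl _)
    · exact Or.inr (hmono h).le
  exact (Set.infinite_range_of_injective hmono.injective) (hch _ hchain)

lemma noChain_antitone_eventually_const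
    (hch : ∀ C : Set K, IsChain (· ≤ ·) C → C.Finite)
    (f : ℕ → K) (hf : Antitone f) : ∃ N, ∀ n, N ≤ n → f n = f N := by
  obtain ⟨mv, ⟨N, hNeq⟩, hmin⟩ := (noChain_wfLT hch).has_min (Set.range f) ⟨f 0, 0, rfl⟩
  refine ⟨N, fun n hn => ?_⟩
  by_contra hne
  exact hmin (f n) ⟨n, rfl⟩ (hNeq ▸ lt_of_le_of_ne (hf hn) hne)

lemma noChain_monotone_eventually_const
    (hch : ∀ C : Set K, IsChain (· ≤ ·) C → C.Finite)
    (f : ℕ → K) (hf : Monotone f) : ∃ N, ∀ n, N ≤ n → f n = f N := by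
  obtain ⟨mv, ⟨N, hNeq⟩, hmin⟩ := (noChain_wfGT hch).has_min (Set.range f) ⟨f 0, 0, rfl⟩
  refine ⟨N, fun n hn => ?_⟩
  by_contra hne
  have : mv < f n := hNeq ▸ lt_of_le_of_ne (hf hn) (fun h => hne h.symm)
  exact hmin (f n) ⟨n, rfl⟩ this

/-- A join-semidistributive lattice with no infinite chains is finite. -/
lemma sd_noChain_finite
    (sd : ∀ a b c : K, a ⊔ b = a ⊔ c → a ⊔ (b ⊓ c) = a ⊔ b)
    (hch : ∀ C : Set K, IsChain (· ≤ ·) C → C.Finite) : Finite K := by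
  by_contra hfin
  have hinf : Infinite K := not_finite_iff_infinite.mp hfin
  have wflt := noChain_wfLT hch
  have wfgt := noChain_wfGT hch
  -- bottom and top elements
  obtain ⟨bot, -, hminb⟩ := wflt.has_min Set.univ ⟨Classical.arbitrary K, trivial⟩
  have hbot : ∀ y, bot ≤ y := by
    intro y
    rcases (inf_le_left : bot ⊓ y ≤ bot).lt_or_eq with h | h
    · exact absurd h (hminb _ trivial)
    · exact h ▸ inf_le_right
  obtain ⟨top, -, hmaxt⟩ := wfgt.has_min Set.univ ⟨Classical.arbitrary K, trivial⟩
  have htop : ∀ y, y ≤ top := by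
    intro y
    rcases (le_sup_left : top ≤ top ⊔ y).lt_or_eq with h | h
    · exact absurd h (hmaxt _ trivial : ¬ top ⊔ y > top)
    · exact h ▸ le_sup_right
  -- minimal infinite interval
  set R : K × K → K × K → Prop := fun p q => q.1 ≤ p.1 ∧ p.2 ≤ q.2 ∧ p ≠ q with hR
  haveI : IsIrrefl (K × K) R := ⟨fun p hp => hp.2.2 rfl⟩
  haveI : IsTrans (K × K) R := ⟨by
    rintro p q r ⟨h1, h2, h3⟩ ⟨h4, h5, h6⟩
    refine ⟨h4.trans h1, h2.trans h5, fun hpr => h3 ?_⟩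
    subst hpr
    exact Prod.ext (le_antisymm h4 h1) (le_antisymm h2 h5)⟩
  haveI : IsStrictOrder (K × K) R := ⟨⟩
  have wfR : WellFounded R := by
    rw [RelEmbedding.wellFounded_iff_isEmpty]
    constructor
    intro e
    have hstep : ∀ {i j : ℕ}, i < j → R (e j) (e i) := fun h => e.map_rel_iff.2 h
    have hmono1 : Monotone (fun n => (e n : K × K).1) := by
      intro i j hij
      rcases lt_or_eq_of_le hij with h | h
      · exact (hstep h).1
      · exact h ▸ le_refl _
    have hanti2 : Antitone (fun n => (e n : K × K).2) := by
      intro i j hij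
      rcases lt_or_eq_of_le hij with h | h
      · exact (hstep h).2.1
      · exact h ▸ le_refl _
    obtain ⟨N₁, h1⟩ := noChain_monotone_eventually_const hch _ hmono1
    obtain ⟨N₂, h2⟩ := noChain_antitone_eventually_const hch _ hanti2
    set N := max N₁ N₂
    have hNe : e (N + 1) = e N := by
      have e1 : (e (N+1) : K × K).1 = (e N : K × K).1 := by
        rw [h1 (N+1) ((le_max_left _ _).trans (Nat.le_succ N)),
          h1 N (le_max_left _ _)]
      have e2 : (e (N+1) : K × K).2 = (e N : K × K).2 := by
        rw [h2 (N+1) ((le_max_right _ _).trans (Nat.le_succ N)),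
          h2 N (le_max_right _ _)]
      exact Prod.ext e1 e2
    exact (hstep (Nat.lt_succ_self N)).2.2 hNe
  obtain ⟨⟨z, t⟩, hzt, hminB⟩ := wfR.has_min {p : K × K | (Set.Icc p.1 p.2).Infinite}
    ⟨(bot, top), by
      simp only [Set.mem_setOf_eq]
      have : Set.Icc bot top = Set.univ := Set.eq_univ_of_forall (fun x => ⟨hbot x, htop x⟩)
      rw [this]; exact Set.infinite_univ⟩
  simp only [Set.mem_setOf_eq] at hzt
  have hproper : ∀ p : K × K, z ≤ p.1 → p.2 ≤ t → p ≠ (z, t) → (Set.Icc p.1 p.2).Finite := by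
    intro p h1 h2 h3
    by_contra hinf'
    exact hminB p hinf' ⟨h1, h2, h3⟩
  have hzlet : z ≤ t := by
    obtain ⟨w, hw⟩ := hzt.nonempty
    exact hw.1.trans hw.2
  have hznet : z ≠ t := by
    intro h
    subst h
    exact hzt (Set.Icc_self z ▸ Set.finite_singleton z)
  -- coatoms of the interval [z, t]
  have coat : ∀ x, z ≤ x → x < t →
      ∃ m, x ≤ m ∧ (z ≤ m ∧ m < t ∧ ∀ w, m < w → w ≤ t → w = t) := by
    intro x hzx hxt
    obtain ⟨m, hm, hmax⟩ := wfgt.has_min {w | x ≤ w ∧ w < t} ⟨x, le_refl x, hxt⟩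
    refine ⟨m, hm.1, hzx.trans hm.1, hm.2, fun w hmw hwt => ?_⟩
    by_contra hne
    exact hmax w ⟨hm.1.trans hmw.le, lt_of_le_of_ne hwt hne⟩ hmw
  set CoA : Set K := {m : K | z ≤ m ∧ m < t ∧ ∀ w, m < w → w ≤ t → w = t} with hCoA
  have hCoAinf : CoA.Infinite := by
    by_contra hfc
    rw [Set.not_infinite] at hfc
    have hsub : Set.Icc z t ⊆ insert t (⋃ m ∈ CoA, Set.Icc z m) := by
      intro x hx
      rcases eq_or_lt_of_le hx.2 with h | h
      · exact h ▸ Set.mem_insert _ _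
      · obtain ⟨m, hxm, hmCoA⟩ := coat x hx.1 h
        exact Set.mem_insert_iff.mpr (Or.inr (Set.mem_biUnion hmCoA ⟨hx.1, hxm⟩))
    have hfin2 : (insert t (⋃ m ∈ CoA, Set.Icc z m)).Finite := by
      refine Set.Finite.insert t (Set.Finite.biUnion hfc (fun m hm => ?_))
      exact hproper (z, m) le_rfl hm.2.1.le
        (by simp only [ne_eq, Prod.mk.injEq, true_and]; exact hm.2.1.ne)
    exact hzt (hfin2.subset hsub)
  set e := hCoAinf.natEmbedding with he
  set m : ℕ → K := fun n => (e n : K) with hm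
  have minj : Function.Injective m := fun i j h => e.injective (Subtype.ext h)
  have mprop : ∀ n, z ≤ m n ∧ m n < t ∧ ∀ w, m n < w → w ≤ t → w = t := fun n => (e n).2
  have pairJoin : ∀ i j, i ≠ j → m i ⊔ m j = t := by
    intro i j hij
    have h1 : m i ⊔ m j ≤ t := sup_le (mprop i).2.1.le (mprop j).2.1.le
    have h2 : m i < m i ⊔ m j := by
      rcases (le_sup_left : m i ≤ m i ⊔ m j).lt_or_eq with h | h
      · exact h
      · exfalso
        have hji : m j ≤ m i := h ▸ le_sup_right
        have hlt : m j < m i := lt_of_le_of_ne hji (fun hh => hij (minj hh).symm)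
        exact (mprop i).2.1.ne ((mprop j).2.2 (m i) hlt (mprop i).2.1.le)
    exact (mprop i).2.2 _ h2 h1
  set d : ℕ → K := fun n => Nat.rec (m 1) (fun k dk => dk ⊓ m (k + 2)) n with hd
  have dsucc : ∀ n, d (n + 1) = d n ⊓ m (n + 2) := fun n => rfl
  have dAnti : Antitone d := antitone_nat_of_succ_le (fun n => (dsucc n) ▸ inf_le_left)
  have dle : ∀ n, d n ≤ m (n + 1) := by
    intro n
    cases n with
    | zero => exact le_refl _
    | succ k => exact (dsucc k) ▸ inf_le_right
  have joins : ∀ n, m 0 ⊔ d n = t := by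
    intro n
    induction n with
    | zero => exact pairJoin 0 1 (by omega)
    | succ k ih =>
      have h2 : m 0 ⊔ m (k + 2) = t := pairJoin 0 (k + 2) (by omega)
      have := sd (m 0) (d k) (m (k + 2)) (ih.trans h2.symm)
      rw [dsucc k, this, ih]
  obtain ⟨N, hN⟩ := noChain_antitone_eventually_const hch d dAnti
  set dd := d N with hdd
  have ddled : ∀ k, dd ≤ d k := by
    intro k
    rcases le_total k N with h | h
    · exact dAnti h
    · exact (hN k h) ▸ le_refl _
  have ddlem : ∀ k, dd ≤ m (k + 1) := fun k => (ddled k).trans (dle k)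
  have zledd : z ≤ dd := by
    have : ∀ n, z ≤ d n := by
      intro n
      induction n with
      | zero => exact (mprop 1).1
      | succ k ih => exact (dsucc k) ▸ le_inf ih (mprop (k + 2)).1
    exact this N
  rcases eq_or_lt_of_le zledd with h | h
  · -- dd = z : then m 0 = t, contradiction
    have : m 0 ⊔ dd = m 0 := sup_eq_left.mpr (h ▸ (mprop 0).1)
    exact (mprop 0).2.1.ne ((this.symm.trans (joins N)))
  · -- z < dd : the interval [dd, t] is finite but contains all the coatoms m (k+1)
    have hfinI : (Set.Icc dd t).Finite := hproper (dd, t) zledd le_rfl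
      (by simp only [ne_eq, Prod.mk.injEq, and_true]; exact h.ne')
    have : (Set.Icc dd t).Infinite := by
      refine Set.infinite_of_injective_forall_mem
        (f := fun k : ℕ => m (k + 1)) ?_ ?_
      · intro i j hij
        have := minj hij
        omega
      · exact fun k => ⟨ddlem k, (mprop (k + 1)).2.1.le⟩
    exact this hfinI

end Endgame

/-- Jónsson's theorem: every sublattice of finite length (i.e. with no infinite chain)
of a free lattice is finite. -/
theorem jonsson_sublattice_finite_length_finite {X : Type u} {F : Type v} [Lattice F]
    (ι : X → F) (hF : IsFreeLatticeOn ι) (S : Sublattice F)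
    (hlen : ∀ C : Set F, C ⊆ (S : Set F) → IsChain (· ≤ ·) C → C.Finite) :
    (S : Set F).Finite := by
  have hsd : ∀ a b c : S, a ⊔ b = a ⊔ c → a ⊔ (b ⊓ c) = a ⊔ b := by
    intro a b c h
    have h' : (a : F) ⊔ (b : F) = (a : F) ⊔ (c : F) := by
      have := congrArg (fun x : S => (x : F)) h
      simpa [Sublattice.coe_sup] using this
    have hkey := hF.sd_join (a : F) (b : F) (c : F) h'
    apply Subtype.ext
    simpa [Sublattice.coe_sup, Sublattice.coe_inf] using hkey
  have hch : ∀ C : Set S, IsChain (· ≤ ·) C → C.Finite := by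
    intro C hC
    have hchain : IsChain (· ≤ ·) (Subtype.val '' C : Set F) := by
      rintro _ ⟨x, hx, rfl⟩ _ ⟨y, hy, rfl⟩ hne
      rcases hC hx hy (fun h => hne (congrArg Subtype.val h)) with h | h
      · exact Or.inl h
      · exact Or.inr h
    have hfin := hlen _ (by rintro _ ⟨x, hx, rfl⟩; exact x.2) hchain
    exact hfin.of_finite_image (Subtype.val_injective.injOn)
  have hfinS : Finite S := sd_noChain_finite hsd hch
  exact Set.finite_coe_iff.mp hfinS
end
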